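/- arXiv:2207.02983 — 3 statements merged into one kernel-verified Lean document; each statement's English description precedes it below -/
import Mathlib

section
/- Let E₁, E₂ be spectral measures (projection-valued measures) on measurable spaces, acting on a Hilbert space H, and let φₙ ∈ L^∞(E₁), ψₙ ∈ L^∞(E₂) for n = 1,…,N. For any bounded operator Q on H, the operator W = Σₙ (∫φₙ dE₁) Q (∫ψₙ dE₂) satisfies ‖W‖ ≤ ‖Σₙ|φₙ|²‖_{L^∞(E₁)}^{1/2} · ‖Σₙ|ψₙ|²‖_{L^∞(E₂)}^{1/2} · ‖Q‖. -/
open scoped BoundedContinuousFunction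

open scoped InnerProductSpace

private lemma sum_norm_sq_apply_le
    {X H : Type*} [TopologicalSpace X]
    [NormedAddCommGroup H] [InnerProductSpace ℂ H] [CompleteSpace H] {N : ℕ}
    (π : (X →ᵇ ℂ) →⋆ₐ[ℂ] (H →L[ℂ] H)) (hπ : ∀ φ, ‖π φ‖ ≤ ‖φ‖)
    (f : Fin N → (X →ᵇ ℂ)) (x : H) :
    ∑ n, ‖π (f n) x‖ ^ 2 ≤ ‖∑ n, star (f n) * f n‖ * ‖x‖ ^ 2 := by
  have h1 : ∀ n : Fin N, (‖π (f n) x‖ : ℝ) ^ 2 =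
      RCLike.re ⟪x, (π (star (f n) * f n)) x⟫_ℂ := by
    intro n
    rw [map_mul, map_star, ContinuousLinearMap.mul_apply,
      ContinuousLinearMap.star_eq_adjoint, ContinuousLinearMap.adjoint_inner_right,
      inner_self_eq_norm_sq]
  calc ∑ n, ‖π (f n) x‖ ^ 2
      = RCLike.re ⟪x, (π (∑ n, star (f n) * f n)) x⟫_ℂ := by
        simp_rw [h1, map_sum, ContinuousLinearMap.sum_apply, inner_sum, map_sum]
    _ ≤ ‖⟪x, (π (∑ n, star (f n) * f n)) x⟫_ℂ‖ := RCLike.re_le_norm _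
    _ ≤ ‖x‖ * ‖(π (∑ n, star (f n) * f n)) x‖ := norm_inner_le_norm _ _
    _ ≤ ‖x‖ * (‖π (∑ n, star (f n) * f n)‖ * ‖x‖) := by
        gcongr; exact ContinuousLinearMap.le_opNorm _ _
    _ ≤ ‖x‖ * (‖∑ n, star (f n) * f n‖ * ‖x‖) := by
        gcongr ‖x‖ * (?_ * ‖x‖)
        exact hπ _
    _ = ‖∑ n, star (f n) * f n‖ * ‖x‖ ^ 2 := by ring

/-- Abstract form of the Haagerup estimate for double operator integrals with integrands of
the form `Φ(x,y) = Σₙ φₙ(x) ψₙ(y)`. Spectral integration `φ ↦ ∫ φ dE` against a spectral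
measure `E` is modelled by a contractive star-algebra homomorphism `π` from an algebra of
bounded functions to the bounded operators on a complex Hilbert space `H` (so that
`‖π φ‖ ≤ ‖φ‖_∞`, as for `∫ φ dE`). Then `W = Σₙ (∫ φₙ dE₁) Q (∫ ψₙ dE₂)` satisfies
`‖W‖ ≤ ‖Σₙ|φₙ|²‖_∞^{1/2} ‖Σₙ|ψₙ|²‖_∞^{1/2} ‖Q‖`. -/
theorem norm_sum_spectralIntegral_mul_le
    {X Y H : Type*} [TopologicalSpace X] [TopologicalSpace Y]
    [NormedAddCommGroup H] [InnerProductSpace ℂ H] [CompleteSpace H] (N : ℕ)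
    (π₁ : (X →ᵇ ℂ) →⋆ₐ[ℂ] (H →L[ℂ] H)) (π₂ : (Y →ᵇ ℂ) →⋆ₐ[ℂ] (H →L[ℂ] H))
    (hπ₁ : ∀ φ, ‖π₁ φ‖ ≤ ‖φ‖) (hπ₂ : ∀ ψ, ‖π₂ ψ‖ ≤ ‖ψ‖)
    (φ : Fin N → (X →ᵇ ℂ)) (ψ : Fin N → (Y →ᵇ ℂ)) (Q : H →L[ℂ] H) :
    ‖∑ n, (π₁ (φ n)).comp (Q.comp (π₂ (ψ n)))‖ ≤
      Real.sqrt ‖∑ n, star (φ n) * φ n‖ * Real.sqrt ‖∑ n, star (ψ n) * ψ n‖ * ‖Q‖ := by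
  set W := ∑ n, (π₁ (φ n)).comp (Q.comp (π₂ (ψ n))) with hW
  set C : ℝ := Real.sqrt ‖∑ n, star (φ n) * φ n‖ * Real.sqrt ‖∑ n, star (ψ n) * ψ n‖ * ‖Q‖
    with hC
  have hC0 : 0 ≤ C := by positivity
  -- key inner product bound
  have key : ∀ x y : H, ‖⟪y, W x⟫_ℂ‖ ≤ C * ‖y‖ * ‖x‖ := by
    intro x y
    have h1 : ⟪y, W x⟫_ℂ = ∑ n, ⟪π₁ (star (φ n)) y, Q (π₂ (ψ n) x)⟫_ℂ := by
      rw [hW, ContinuousLinearMap.sum_apply, inner_sum]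
      refine Finset.sum_congr rfl fun n _ => ?_
      rw [map_star, ContinuousLinearMap.star_eq_adjoint,
        ContinuousLinearMap.adjoint_inner_left]
      rfl
    calc ‖⟪y, W x⟫_ℂ‖
        ≤ ∑ n, ‖⟪π₁ (star (φ n)) y, Q (π₂ (ψ n) x)⟫_ℂ‖ := by
          rw [h1]; exact norm_sum_le _ _
      _ ≤ ∑ n, ‖π₁ (star (φ n)) y‖ * (‖Q‖ * ‖π₂ (ψ n) x‖) := by
          refine Finset.sum_le_sum fun n _ => ?_
          refine (norm_inner_le_norm _ _).trans ?_
          gcongr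
          exact Q.le_opNorm _
      _ = ‖Q‖ * ∑ n, ‖π₁ (star (φ n)) y‖ * ‖π₂ (ψ n) x‖ := by
          rw [Finset.mul_sum]; refine Finset.sum_congr rfl fun n _ => by ring
      _ ≤ ‖Q‖ * (Real.sqrt (∑ n, ‖π₁ (star (φ n)) y‖ ^ 2) *
            Real.sqrt (∑ n, ‖π₂ (ψ n) x‖ ^ 2)) := by
          gcongr
          exact Real.sum_mul_le_sqrt_mul_sqrt _ _ _
      _ ≤ ‖Q‖ * (Real.sqrt (‖∑ n, star (φ n) * φ n‖ * ‖y‖ ^ 2) *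
            Real.sqrt (‖∑ n, star (ψ n) * ψ n‖ * ‖x‖ ^ 2)) := by
          gcongr ‖Q‖ * (Real.sqrt ?_ * Real.sqrt ?_)
          · have := sum_norm_sq_apply_le π₁ hπ₁ (fun n => star (φ n)) y
            simpa only [star_star, mul_comm] using this
          · exact sum_norm_sq_apply_le π₂ hπ₂ ψ x
      _ = C * ‖y‖ * ‖x‖ := by
          rw [Real.sqrt_mul (norm_nonneg _), Real.sqrt_mul (norm_nonneg _),
            Real.sqrt_sq (norm_nonneg _), Real.sqrt_sq (norm_nonneg _), hC]
          ring
  refine ContinuousLinearMap.opNorm_le_bound _ hC0 fun x => ?_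
  have h2 := key x (W x)
  have h3 : ‖W x‖ ^ 2 ≤ C * ‖W x‖ * ‖x‖ := by
    rw [← inner_self_eq_norm_sq (𝕜 := ℂ)]
    exact (RCLike.re_le_norm _).trans h2
  by_cases h0 : ‖W x‖ = 0
  · rw [h0]; positivity
  · have hpos : 0 < ‖W x‖ := lt_of_le_of_ne (norm_nonneg _) (Ne.symm h0)
    nlinarith [hpos, h3]
end

section
/- Let A₁, A₂, B be self-adjoint n×n complex matrices with spectral decompositions A₁ = Σ_j λ_j P_j, A₂ = Σ_k ν_k R_k, B = Σ_m μ_m Q_m, and let f : R² → C be such that its divided difference D¹f is defined everywhere (f continuously differentiable in x). Then f(A₁, B) - f(A₂, B) = Σ_{j,k,m} D¹f(λ_j, ν_k, μ_m) P_j (A₁ - A₂) R_k Q_m, where f(A, B) := Σ f(eigenvalue pairs) · (spectral projections) as in the double operator integral. -/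
/-- Finite-dimensional triple operator integral formula in the first variable: for
self-adjoint matrices `A₁ = Σ λⱼ Pⱼ`, `A₂ = Σ νₖ Rₖ`, `B = Σ μₘ Qₘ` and a function `f`
continuously differentiable in the first variable (with partial derivative `d`),
`f(A₁,B) - f(A₂,B) = Σ_{j,k,m} D¹f(λⱼ, νₖ, μₘ) Pⱼ (A₁ - A₂) Rₖ Qₘ`, where the double
operator integral is `f(A,B) = Σ f(λⱼ, μₘ) Pⱼ Qₘ` and `D¹f` is the divided difference. -/
theorem tripleOperatorIntegral_formula_first_variable (n J K M : ℕ)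
    (A₁ A₂ B : Matrix (Fin n) (Fin n) ℂ)
    (lam : Fin J → ℝ) (P : Fin J → Matrix (Fin n) (Fin n) ℂ)
    (nu : Fin K → ℝ) (R : Fin K → Matrix (Fin n) (Fin n) ℂ)
    (mu : Fin M → ℝ) (Q : Fin M → Matrix (Fin n) (Fin n) ℂ)
    (hPherm : ∀ j, (P j).IsHermitian) (hPidem : ∀ j, P j * P j = P j)
    (hPorth : ∀ j j', j ≠ j' → P j * P j' = 0) (hPsum : ∑ j, P j = 1)
    (hRherm : ∀ k, (R k).IsHermitian) (hRidem : ∀ k, R k * R k = R k)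
    (hRorth : ∀ k k', k ≠ k' → R k * R k' = 0) (hRsum : ∑ k, R k = 1)
    (hQherm : ∀ m, (Q m).IsHermitian) (hQidem : ∀ m, Q m * Q m = Q m)
    (hQorth : ∀ m m', m ≠ m' → Q m * Q m' = 0) (hQsum : ∑ m, Q m = 1)
    (hA₁ : A₁ = ∑ j, (lam j : ℂ) • P j) (hA₂ : A₂ = ∑ k, (nu k : ℂ) • R k)
    (hB : B = ∑ m, (mu m : ℂ) • Q m)
    (f : ℝ → ℝ → ℂ) (d : ℝ → ℝ → ℂ)
    (hd : ∀ y x, HasDerivAt (fun x' : ℝ => f x' y) (d x y) x) :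
    (∑ j, ∑ m, f (lam j) (mu m) • (P j * Q m)) -
        (∑ k, ∑ m, f (nu k) (mu m) • (R k * Q m)) =
      ∑ j, ∑ k, ∑ m,
        (if lam j = nu k then d (lam j) (mu m)
          else (f (lam j) (mu m) - f (nu k) (mu m)) / ((lam j - nu k : ℝ) : ℂ)) •
          (P j * (A₁ - A₂) * R k * Q m) := by
  have hPA : ∀ j, P j * A₁ = (lam j : ℂ) • P j := by
    intro j
    rw [hA₁, Finset.mul_sum, Finset.sum_eq_single j]
    · rw [Matrix.mul_smul, hPidem]
    · intro j' _ hne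
      rw [Matrix.mul_smul, hPorth j j' (Ne.symm hne), smul_zero]
    · simp
  have hAR : ∀ k, A₂ * R k = (nu k : ℂ) • R k := by
    intro k
    rw [hA₂, Finset.sum_mul, Finset.sum_eq_single k]
    · rw [Matrix.smul_mul, hRidem]
    · intro k' _ hne
      rw [Matrix.smul_mul, hRorth k' k hne, smul_zero]
    · simp
  have key : ∀ j k, P j * (A₁ - A₂) * R k
      = (((lam j - nu k : ℝ) : ℂ)) • (P j * R k) := by
    intro j k
    have : P j * (A₁ - A₂) * R k = P j * A₁ * R k - P j * (A₂ * R k) := by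
      rw [mul_sub, sub_mul, mul_assoc (P j) A₂]
    rw [this, hPA, hAR, Matrix.smul_mul, Matrix.mul_smul, Complex.ofReal_sub,
      sub_smul]
  have summand : ∀ j k m,
      (if lam j = nu k then d (lam j) (mu m)
        else (f (lam j) (mu m) - f (nu k) (mu m)) / ((lam j - nu k : ℝ) : ℂ)) •
        (P j * (A₁ - A₂) * R k * Q m)
      = (f (lam j) (mu m) - f (nu k) (mu m)) • (P j * R k * Q m) := by
    intro j k m
    rw [key j k, Matrix.smul_mul, smul_smul]
    by_cases h : lam j = nu k
    · simp [h]
    · rw [if_neg h, div_mul_cancel₀]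
      exact fun hc => h (sub_eq_zero.mp (by exact_mod_cast hc))
  simp only [summand, sub_smul, Finset.sum_sub_distrib]
  congr 1
  · refine Finset.sum_congr rfl fun j _ => ?_
    symm
    rw [Finset.sum_comm]
    refine Finset.sum_congr rfl fun m _ => ?_
    rw [← Finset.smul_sum, ← Finset.sum_mul, ← Finset.mul_sum, hRsum, mul_one]
  · symm
    rw [Finset.sum_comm]
    refine Finset.sum_congr rfl fun k _ => ?_
    rw [Finset.sum_comm]
    refine Finset.sum_congr rfl fun m _ => ?_
    rw [← Finset.smul_sum, ← Finset.sum_mul, ← Finset.sum_mul, hPsum, one_mul]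
end

section
/- Let A, B₁, B₂ be self-adjoint n×n complex matrices with spectral decompositions A = Σ_j λ_j P_j, B₁ = Σ_k μ_k Q_k, B₂ = Σ_m ρ_m S_m, and let f : R² → C be continuously differentiable in the second variable. Then f(A, B₁) - f(A, B₂) = Σ_{j,k,m} D²f(λ_j, μ_k, ρ_m) P_j Q_k (B₁ - B₂) S_m, where D²f(x, y₁, y₂) = (f(x,y₁) - f(x,y₂))/(y₁ - y₂) for y₁ ≠ y₂ and ∂₂f(x,y) on the diagonal. -/
/-- Finite-dimensional triple operator integral formula in the second variable: for
self-adjoint matrices `A = Σ λⱼ Pⱼ`, `B₁ = Σ μₖ Qₖ`, `B₂ = Σ ρₘ Sₘ` and a function `f`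
continuously differentiable in the second variable (with partial derivative `d`),
`f(A,B₁) - f(A,B₂) = Σ_{j,k,m} D²f(λⱼ, μₖ, ρₘ) Pⱼ Qₖ (B₁ - B₂) Sₘ`, where the double
operator integral is `f(A,B) = Σ f(λⱼ, μₖ) Pⱼ Qₖ` and `D²f` is the divided difference
in the second variable. -/
theorem tripleOperatorIntegral_formula_second_variable (n J K M : ℕ)
    (A B₁ B₂ : Matrix (Fin n) (Fin n) ℂ)
    (lam : Fin J → ℝ) (P : Fin J → Matrix (Fin n) (Fin n) ℂ)
    (mu : Fin K → ℝ) (Q : Fin K → Matrix (Fin n) (Fin n) ℂ)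
    (rho : Fin M → ℝ) (S : Fin M → Matrix (Fin n) (Fin n) ℂ)
    (hPherm : ∀ j, (P j).IsHermitian) (hPidem : ∀ j, P j * P j = P j)
    (hPorth : ∀ j j', j ≠ j' → P j * P j' = 0) (hPsum : ∑ j, P j = 1)
    (hQherm : ∀ k, (Q k).IsHermitian) (hQidem : ∀ k, Q k * Q k = Q k)
    (hQorth : ∀ k k', k ≠ k' → Q k * Q k' = 0) (hQsum : ∑ k, Q k = 1)
    (hSherm : ∀ m, (S m).IsHermitian) (hSidem : ∀ m, S m * S m = S m)
    (hSorth : ∀ m m', m ≠ m' → S m * S m' = 0) (hSsum : ∑ m, S m = 1)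
    (hA : A = ∑ j, (lam j : ℂ) • P j) (hB₁ : B₁ = ∑ k, (mu k : ℂ) • Q k)
    (hB₂ : B₂ = ∑ m, (rho m : ℂ) • S m)
    (f : ℝ → ℝ → ℂ) (d : ℝ → ℝ → ℂ)
    (hd : ∀ x y, HasDerivAt (fun y' : ℝ => f x y') (d x y) y) :
    (∑ j, ∑ k, f (lam j) (mu k) • (P j * Q k)) -
        (∑ j, ∑ m, f (lam j) (rho m) • (P j * S m)) =
      ∑ j, ∑ k, ∑ m,
        (if mu k = rho m then d (lam j) (mu k)
          else (f (lam j) (mu k) - f (lam j) (rho m)) / ((mu k - rho m : ℝ) : ℂ)) •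
          (P j * Q k * (B₁ - B₂) * S m) := by
  have hQB : ∀ k, Q k * B₁ = (mu k : ℂ) • Q k := by
    intro k
    rw [hB₁, Finset.mul_sum, Finset.sum_eq_single k]
    · rw [mul_smul_comm, hQidem]
    · intro k' _ hk'
      rw [mul_smul_comm, hQorth k k' (Ne.symm hk'), smul_zero]
    · simp
  have hBS : ∀ m, B₂ * S m = (rho m : ℂ) • S m := by
    intro m
    rw [hB₂, Finset.sum_mul, Finset.sum_eq_single m]
    · rw [smul_mul_assoc, hSidem]
    · intro m' _ hm'
      rw [smul_mul_assoc, hSorth m' m hm', smul_zero]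
    · simp
  have key : ∀ j k m,
      (if mu k = rho m then d (lam j) (mu k)
        else (f (lam j) (mu k) - f (lam j) (rho m)) / ((mu k - rho m : ℝ) : ℂ)) •
        (P j * Q k * (B₁ - B₂) * S m)
      = (f (lam j) (mu k) - f (lam j) (rho m)) • (P j * Q k * S m) := by
    intro j k m
    have hmid : Q k * (B₁ - B₂) * S m = ((mu k - rho m : ℝ) : ℂ) • (Q k * S m) := by
      rw [mul_sub, sub_mul, hQB k, mul_assoc, hBS m, smul_mul_assoc, mul_smul_comm,
        ← sub_smul]
      push_cast
      ring_nf
    have h1 : P j * Q k * (B₁ - B₂) * S m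
        = ((mu k - rho m : ℝ) : ℂ) • (P j * (Q k * S m)) := by
      rw [mul_assoc (P j), mul_assoc (P j), hmid, mul_smul_comm]
    rw [h1]
    by_cases h : mu k = rho m
    · simp [h]
    · have hne : ((mu k - rho m : ℝ) : ℂ) ≠ 0 :=
        Complex.ofReal_ne_zero.mpr (sub_ne_zero.mpr h)
      rw [if_neg h, smul_smul, div_mul_cancel₀ _ hne, mul_assoc]
  calc (∑ j, ∑ k, f (lam j) (mu k) • (P j * Q k)) -
        (∑ j, ∑ m, f (lam j) (rho m) • (P j * S m))
      = ∑ j, ∑ k, ∑ m, (f (lam j) (mu k) - f (lam j) (rho m)) • (P j * Q k * S m) := by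
        simp only [sub_smul, Finset.sum_sub_distrib]
        congr 1
        · refine Finset.sum_congr rfl fun j _ => Finset.sum_congr rfl fun k _ => ?_
          rw [← Finset.smul_sum, ← Finset.mul_sum, hSsum, mul_one]
        · refine Finset.sum_congr rfl fun j _ => ?_
          rw [Finset.sum_comm]
          refine Finset.sum_congr rfl fun m _ => ?_
          rw [← Finset.smul_sum]
          congr 1
          rw [← Finset.sum_mul, ← Finset.mul_sum, hQsum, mul_one]
    _ = _ := by
        refine Finset.sum_congr rfl fun j _ => Finset.sum_congr rfl fun k _ =>
          Finset.sum_congr rfl fun m _ => ?_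
        rw [key]
end
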